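/- The quartic function V3 = ½[(α r1 s1 + α r2 s2 + s1 s3)² + s3²(s2² + (α r1 + s3)²)] is a first integral of the transformed system: for every real α, the derivative of V3 along the vector field X_T vanishes identically on ℝ⁶. -/

import Mathlib

noncomputable section

/-- The transformed system (Kirchhoff's equations in Sokolov's case after a linear
change of variables, β = 0): the polynomial vector field on ℝ⁶ with coordinates
(s1, s2, s3, r1, r2, r3) and real parameter α. -/
noncomputable def XT (α : ℝ) : ℝ × ℝ × ℝ × ℝ × ℝ × ℝ → ℝ × ℝ × ℝ × ℝ × ℝ × ℝ :=
  fun (s1, s2, s3, r1, r2, r3) =>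
    ((α * r1 + s3) * s2 - α ^ 2 * r2 * r3,
     (α * r3 - s1) * (α * r1 + s3),
     -(α * r2 * s3),
     (α * r1 + 2 * s3) * r2 - r3 * s2,
     r3 * s1 - r1 * (α * r1 + 2 * s3),
     r1 * s2 - r2 * s1)

/-- V3 = ½[(α r1 s1 + α r2 s2 + s1 s3)² + s3²(s2² + (α r1 + s3)²)]. -/
noncomputable def V3T (α : ℝ) : ℝ × ℝ × ℝ × ℝ × ℝ × ℝ → ℝ :=
  fun (s1, s2, s3, r1, r2, r3) =>
    (1 / 2) * ((α * r1 * s1 + α * r2 * s2 + s1 * s3) ^ 2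
      + s3 ^ 2 * (s2 ^ 2 + (α * r1 + s3) ^ 2))

/-- The derivative of `V3T α` at a point, applied to an arbitrary vector. -/
lemma fderiv_V3T (α s1 s2 s3 r1 r2 r3 v1 v2 v3 v4 v5 v6 : ℝ) :
    fderiv ℝ (V3T α) (s1, s2, s3, r1, r2, r3) (v1, v2, v3, v4, v5, v6) =
      (α * r1 * s1 + α * r2 * s2 + s1 * s3) *
        (α * (v4 * s1 + r1 * v1) + α * (v5 * s2 + r2 * v2) + (v1 * s3 + s1 * v3))
      + s3 * v3 * (s2 ^ 2 + (α * r1 + s3) ^ 2)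
      + s3 ^ 2 * (s2 * v2 + (α * r1 + s3) * (α * v4 + v3)) := by
  have hdiff : DifferentiableAt ℝ (V3T α) (s1, s2, s3, r1, r2, r3) := by
    have : V3T α = fun p : ℝ × ℝ × ℝ × ℝ × ℝ × ℝ =>
      (1 / 2) * ((α * p.2.2.2.1 * p.1 + α * p.2.2.2.2.1 * p.2.1 + p.1 * p.2.2.1) ^ 2
        + p.2.2.1 ^ 2 * (p.2.1 ^ 2 + (α * p.2.2.2.1 + p.2.2.1) ^ 2)) := rfl
    rw [this]; fun_prop
  set P : ℝ × ℝ × ℝ × ℝ × ℝ × ℝ := (s1, s2, s3, r1, r2, r3) with hP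
  set V : ℝ × ℝ × ℝ × ℝ × ℝ × ℝ := (v1, v2, v3, v4, v5, v6) with hV
  have hline : HasDerivAt (fun t : ℝ => P + t • V) V 0 := by
    simpa using ((hasDerivAt_id (0 : ℝ)).smul_const V).const_add P
  have hP0 : HasFDerivAt (V3T α) (fderiv ℝ (V3T α) P) ((fun t : ℝ => P + t • V) 0) := by
    simpa using hdiff.hasFDerivAt
  have hcomp : HasDerivAt (fun t : ℝ => V3T α (P + t • V)) (fderiv ℝ (V3T α) P V) 0 :=
    by have h := hP0.comp_hasDerivAt 0 hline; exact h
  have h1 : HasDerivAt (fun t : ℝ => s1 + t * v1) v1 0 := by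
    simpa using ((hasDerivAt_id (0 : ℝ)).mul_const v1).const_add s1
  have h2 : HasDerivAt (fun t : ℝ => s2 + t * v2) v2 0 := by
    simpa using ((hasDerivAt_id (0 : ℝ)).mul_const v2).const_add s2
  have h3 : HasDerivAt (fun t : ℝ => s3 + t * v3) v3 0 := by
    simpa using ((hasDerivAt_id (0 : ℝ)).mul_const v3).const_add s3
  have h4 : HasDerivAt (fun t : ℝ => r1 + t * v4) v4 0 := by
    simpa using ((hasDerivAt_id (0 : ℝ)).mul_const v4).const_add r1
  have h5 : HasDerivAt (fun t : ℝ => r2 + t * v5) v5 0 := by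
    simpa using ((hasDerivAt_id (0 : ℝ)).mul_const v5).const_add r2
  have hA := ((((h4.const_mul α).mul h1).add ((h5.const_mul α).mul h2)).add (h1.mul h3))
  have hB := (h4.const_mul α).add h3
  have hC := (h2.pow 2).add (hB.pow 2)
  have hφ := ((hA.pow 2).add ((h3.pow 2).mul hC)).const_mul (1 / 2 : ℝ)
  have hψ : (fun t : ℝ => V3T α (P + t • V)) =
      fun t : ℝ => (1 / 2 : ℝ) *
        ((α * (r1 + t * v4) * (s1 + t * v1) + α * (r2 + t * v5) * (s2 + t * v2)
            + (s1 + t * v1) * (s3 + t * v3)) ^ 2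
          + (s3 + t * v3) ^ 2 * ((s2 + t * v2) ^ 2
            + (α * (r1 + t * v4) + (s3 + t * v3)) ^ 2)) := by
    funext t
    simp [V3T, hP, hV, Prod.smul_mk, Prod.mk_add_mk, smul_eq_mul]
  rw [hψ] at hcomp
  have := hcomp.unique hφ
  rw [this]
  norm_num
  ring

/-- The quartic function V3 is a first integral of the transformed system: for every
real α, the derivative of V3 along the vector field X_T vanishes identically on ℝ⁶. -/
theorem V3_first_integral_transformed (α : ℝ) (p : ℝ × ℝ × ℝ × ℝ × ℝ × ℝ) :
    fderiv ℝ (V3T α) p (XT α p) = 0 := by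
  obtain ⟨s1, s2, s3, r1, r2, r3⟩ := p
  show fderiv ℝ (V3T α) (s1, s2, s3, r1, r2, r3)
      ((α * r1 + s3) * s2 - α ^ 2 * r2 * r3,
       (α * r3 - s1) * (α * r1 + s3),
       -(α * r2 * s3),
       (α * r1 + 2 * s3) * r2 - r3 * s2,
       r3 * s1 - r1 * (α * r1 + 2 * s3),
       r1 * s2 - r2 * s1) = 0
  rw [fderiv_V3T]
  ring
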